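/- arXiv:2104.06717 — 4 statements merged into one kernel-verified Lean document; each statement's English description precedes it below -/
import Mathlib

section
/- If f(z) = ∑_{n=0}^∞ a_n z^n is analytic on the unit disk with |f(z)| ≤ 1 for all |z| < 1, then for all real r with 0 ≤ r ≤ 1/3, the series ∑_{n=0}^∞ |a_n| r^n converges and ∑_{n=0}^∞ |a_n| r^n ≤ 1. -/
/-!
For `n ≥ 1`, averaging `f` over the `n`-th roots of `w` gives the function `∑ⱼ a_{nj} wʲ`, again
bounded by `1` on the disk, with value `a₀` and derivative `aₙ` at the origin. The Schwarz–Pick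
lemma at the origin then yields Wiener's bound `|aₙ| ≤ 1 - |a₀|²`, so for `r ≤ 1/3`
`∑ |aₙ| rⁿ ≤ |a₀| + (1 - |a₀|²) r / (1 - r) ≤ |a₀| + (1 - |a₀|²) / 2 = 1 - (1 - |a₀|)² / 2 ≤ 1`.
-/

open Metric Set Finset
open scoped ComplexConjugate NNReal

theorem IsPrimitiveRoot.geom_sum_pow_eq {K : Type*} [Field K] {ζ : K} {n : ℕ}
    (hζ : IsPrimitiveRoot ζ n) (m : ℕ) :
    ∑ k ∈ range n, (ζ ^ m) ^ k = if n ∣ m then (n : K) else 0 := by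
  split_ifs with hdvd
  · simp [(hζ.pow_eq_one_iff_dvd m).2 hdvd]
  · rw [geom_sum_eq (mt (hζ.pow_eq_one_iff_dvd m).1 hdvd), ← pow_mul, mul_comm, pow_mul,
      hζ.pow_eq_one, one_pow, sub_self, zero_div]

theorem IsPrimitiveRoot.hasSum_mul_pow_mul_of_hasSum {K : Type*} [Field K] [CharZero K]
    [TopologicalSpace K] [IsTopologicalSemiring K] {ζ : K} {n : ℕ} (hζ : IsPrimitiveRoot ζ n)
    (hn : n ≠ 0) {a : ℕ → K} {z : K} {F : ℕ → K}
    (hF : ∀ k < n, HasSum (fun m => a m * (ζ ^ k * z) ^ m) (F k)) :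
    HasSum (fun j => a (n * j) * z ^ (n * j)) ((n : K)⁻¹ * ∑ k ∈ range n, F k) := by
  have hterm : ∀ m, (n : K)⁻¹ * ∑ k ∈ range n, a m * (ζ ^ k * z) ^ m
      = if n ∣ m then a m * z ^ m else 0 := by
    intro m
    have : ∑ k ∈ range n, a m * (ζ ^ k * z) ^ m = a m * z ^ m * ∑ k ∈ range n, (ζ ^ m) ^ k := by
      rw [Finset.mul_sum]
      exact sum_congr rfl fun k _ => by ring
    rw [this, hζ.geom_sum_pow_eq]
    split_ifs
    · field_simp
    · simp
  have hsum := (hasSum_sum fun k hk => hF k (mem_range.1 hk)).mul_left (n : K)⁻¹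
  simp only [hterm] at hsum
  have hvanish : ∀ m ∉ Set.range (n * ·), (if n ∣ m then a m * z ^ m else 0) = 0 :=
    fun m hm => if_neg fun ⟨j, hj⟩ => hm ⟨j, hj.symm⟩
  have := ((mul_right_injective₀ hn).hasSum_iff hvanish).2 hsum
  simpa [Function.comp_def] using this

theorem hasFPowerSeriesOnBall_ofScalars_of_hasSum {h : ℂ → ℂ} {c : ℕ → ℂ} {R : ℝ≥0}
    (hR : 0 < R) (hsum : ∀ w ∈ ball (0 : ℂ) R, HasSum (fun m => c m * w ^ m) (h w)) :
    HasFPowerSeriesOnBall h (FormalMultilinearSeries.ofScalars ℂ c) 0 R where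
  r_le := by
    refine ENNReal.le_of_forall_nnreal_lt fun s hs => ?_
    refine FormalMultilinearSeries.le_radius_of_tendsto _ (l := 0) ?_
    have hs' : ((s : ℝ) : ℂ) ∈ ball (0 : ℂ) R := by
      simpa [abs_of_nonneg s.coe_nonneg] using hs
    simpa [FormalMultilinearSeries.ofScalars_norm] using
      (hsum _ hs').summable.tendsto_atTop_zero.norm
  r_pos := by simpa using hR
  hasSum {y} hy := by
    simp only [zero_add, FormalMultilinearSeries.ofScalars_apply_eq, smul_eq_mul]
    exact hsum y (by simpa using hy)

noncomputable def diskInvolution (a w : ℂ) : ℂ := (a - w) / (1 - conj a * w)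

theorem diskInvolution_self (a : ℂ) : diskInvolution a a = 0 := by
  simp [diskInvolution]

theorem norm_diskInvolution_le_one {a w : ℂ} (ha : ‖a‖ ≤ 1) (hw : ‖w‖ ≤ 1) :
    ‖diskInvolution a w‖ ≤ 1 := by
  rw [diskInvolution, norm_div]
  refine div_le_one_of_le₀ ?_ (norm_nonneg _)
  have hdiff : ‖1 - conj a * w‖ ^ 2 - ‖a - w‖ ^ 2 = (1 - ‖a‖ ^ 2) * (1 - ‖w‖ ^ 2) := by
    simp only [Complex.sq_norm, Complex.normSq_apply, Complex.sub_re, Complex.sub_im,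
      Complex.one_re, Complex.one_im, Complex.mul_re, Complex.mul_im, Complex.conj_re,
      Complex.conj_im]
    ring
  have hprod : 0 ≤ (1 - ‖a‖ ^ 2) * (1 - ‖w‖ ^ 2) := by
    apply mul_nonneg <;> nlinarith [norm_nonneg a, norm_nonneg w]
  exact (sq_le_sq₀ (norm_nonneg _) (norm_nonneg _)).1 (by linarith)

theorem one_sub_conj_mul_self (a : ℂ) : 1 - conj a * a = ((1 - ‖a‖ ^ 2 : ℝ) : ℂ) := by
  rw [mul_comm, Complex.mul_conj, Complex.normSq_eq_norm_sq]
  push_cast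
  ring

theorem one_sub_conj_mul_ne_zero {a w : ℂ} (ha : ‖a‖ < 1) (hw : ‖w‖ ≤ 1) :
    1 - conj a * w ≠ 0 := by
  rw [sub_ne_zero]
  intro h
  have : ‖conj a * w‖ < 1 := by
    rw [norm_mul, Complex.norm_conj]
    nlinarith [norm_nonneg a, norm_nonneg w]
  simp [← h] at this

theorem differentiableAt_diskInvolution {a w : ℂ} (hw : 1 - conj a * w ≠ 0) :
    DifferentiableAt ℂ (diskInvolution a) w :=
  ((differentiableAt_const a).sub differentiableAt_id).div
    ((differentiableAt_const 1).sub (differentiableAt_id.const_mul _)) hw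

theorem hasDerivAt_diskInvolution_self {a : ℂ} (ha : ‖a‖ ≠ 1) :
    HasDerivAt (diskInvolution a) (-((1 - ‖a‖ ^ 2 : ℝ) : ℂ)⁻¹) a := by
  have hD : ((1 - ‖a‖ ^ 2 : ℝ) : ℂ) ≠ 0 := by
    rw [Complex.ofReal_ne_zero, sub_ne_zero, ne_comm]
    exact fun h => ha ((pow_eq_one_iff_of_nonneg (norm_nonneg a) two_ne_zero).1 h)
  have hnum : HasDerivAt (fun w => a - w) (-1) a := by
    simpa using (hasDerivAt_id a).const_sub a
  have hden : HasDerivAt (fun w => 1 - conj a * w) (-conj a) a := by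
    simpa using ((hasDerivAt_id a).const_mul (conj a)).const_sub 1
  refine (hnum.div hden (by rwa [one_sub_conj_mul_self])).congr_deriv ?_
  rw [sub_self, one_sub_conj_mul_self]
  field_simp
  ring

theorem deriv_eq_zero_of_norm_eq_one {h : ℂ → ℂ} (hd : DifferentiableOn ℂ h (ball 0 1))
    (hb : MapsTo h (ball 0 1) (closedBall 0 1)) (h0 : ‖h 0‖ = 1) : deriv h 0 = 0 := by
  have hmax : IsLocalMax (norm ∘ h) 0 :=
    IsMaxOn.isLocalMax (fun w hw => by simpa [h0] using hb hw)
      (isOpen_ball.mem_nhds (mem_ball_self one_pos))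
  have hdiff : ∀ᶠ w in nhds 0, DifferentiableAt ℂ h w := by
    filter_upwards [isOpen_ball.mem_nhds (mem_ball_self one_pos)] with w hw
    exact hd.differentiableAt (isOpen_ball.mem_nhds hw)
  have hconst : h =ᶠ[nhds 0] fun _ => h 0 := Complex.eventually_eq_of_isLocalMax_norm hdiff hmax
  exact hconst.deriv_eq.trans (deriv_const _ _)

/-- Schwarz–Pick at the origin. -/
theorem norm_deriv_le_one_sub_sq_norm {h : ℂ → ℂ} (hd : DifferentiableOn ℂ h (ball 0 1))
    (hb : MapsTo h (ball 0 1) (closedBall 0 1)) : ‖deriv h 0‖ ≤ 1 - ‖h 0‖ ^ 2 := by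
  have h0 : ‖h 0‖ ≤ 1 := by simpa using hb (mem_ball_self one_pos)
  rcases h0.eq_or_lt with h0 | h0
  · simp [deriv_eq_zero_of_norm_eq_one hd hb h0, h0]
  set a := h 0
  have hbw : ∀ w ∈ ball (0 : ℂ) 1, ‖h w‖ ≤ 1 := fun w hw => by simpa using hb hw
  -- Schwarz's lemma applies to `g`, which fixes the origin.
  set g := diskInvolution a ∘ h
  have hgd : DifferentiableOn ℂ g (ball 0 1) := fun w hw =>
    (differentiableAt_diskInvolution (one_sub_conj_mul_ne_zero h0 (hbw w hw))
      ).comp_differentiableWithinAt w (hd w hw)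
  have hgb : MapsTo g (ball 0 1) (closedBall (g 0) 1) := fun w hw => by
    simpa [g, a, diskInvolution_self] using norm_diskInvolution_le_one h0.le (hbw w hw)
  have hg' : deriv g 0 = -((1 - ‖a‖ ^ 2 : ℝ) : ℂ)⁻¹ * deriv h 0 :=
    ((hasDerivAt_diskInvolution_self h0.ne).comp 0
      (hd.differentiableAt (isOpen_ball.mem_nhds (mem_ball_self one_pos))).hasDerivAt).deriv
  have hpos : 0 < 1 - ‖a‖ ^ 2 := by nlinarith [norm_nonneg a]
  have := Complex.norm_deriv_le_one_of_mapsTo_ball hgd hgb one_pos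
  rw [hg', norm_mul, norm_neg, norm_inv, Complex.norm_real, Real.norm_of_nonneg hpos.le,
    inv_mul_le_iff₀ hpos, mul_one] at this
  exact this

theorem norm_coeff_one_le_one_sub_sq {h : ℂ → ℂ} {c : ℕ → ℂ}
    (hsum : ∀ w ∈ ball (0 : ℂ) 1, HasSum (fun m => c m * w ^ m) (h w))
    (hb : ∀ w ∈ ball (0 : ℂ) 1, ‖h w‖ ≤ 1) : ‖c 1‖ ≤ 1 - ‖c 0‖ ^ 2 := by
  have hps := hasFPowerSeriesOnBall_ofScalars_of_hasSum (R := 1) one_pos hsum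
  have hd : DifferentiableOn ℂ h (ball 0 1) := by
    simpa only [Metric.eball_coe, NNReal.coe_one] using hps.differentiableOn
  have h0 : h 0 = c 0 := by
    simpa using (hps.hasFPowerSeriesAt.coeff_zero (fun _ => 0)).symm
  have h1 : deriv h 0 = c 1 := by
    simpa [FormalMultilinearSeries.ofScalars_apply_eq] using hps.hasFPowerSeriesAt.hasDerivAt.deriv
  simpa [h0, h1] using norm_deriv_le_one_sub_sq_norm hd fun w hw => by simpa using hb w hw

theorem norm_coeff_le_one_sub_sq {f : ℂ → ℂ} {a : ℕ → ℂ}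
    (hexp : ∀ z ∈ ball (0 : ℂ) 1, HasSum (fun m => a m * z ^ m) (f z))
    (hb : ∀ z ∈ ball (0 : ℂ) 1, ‖f z‖ ≤ 1) {n : ℕ} (hn : n ≠ 0) :
    ‖a n‖ ≤ 1 - ‖a 0‖ ^ 2 := by
  obtain ⟨ζ, hζ⟩ : ∃ ζ : ℂ, IsPrimitiveRoot ζ n := ⟨_, Complex.isPrimitiveRoot_exp n hn⟩
  -- `∑ⱼ a (n j) wʲ` is the mean of `f` over the `n`-th roots of `w`, hence bounded by `1`.
  have hsub : ∀ w ∈ ball (0 : ℂ) 1,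
      ∃ S, HasSum (fun j => a (n * j) * w ^ j) S ∧ ‖S‖ ≤ 1 := by
    intro w hw
    obtain ⟨z, rfl⟩ := IsAlgClosed.exists_pow_nat_eq w (Nat.pos_of_ne_zero hn)
    have hz : ‖z‖ < 1 := by
      rw [mem_ball_zero_iff, norm_pow] at hw
      exact (pow_lt_one_iff_of_nonneg (norm_nonneg z) hn).1 hw
    have hmem : ∀ k, ζ ^ k * z ∈ ball (0 : ℂ) 1 := by
      simp [hζ.norm'_eq_one hn, hz]
    refine ⟨_, by simpa only [pow_mul] using
      hζ.hasSum_mul_pow_mul_of_hasSum hn fun k _ => hexp _ (hmem k), ?_⟩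
    rw [norm_mul, norm_inv, Complex.norm_natCast, inv_mul_le_one₀ (by positivity)]
    calc ‖∑ k ∈ range n, f (ζ ^ k * z)‖ ≤ ∑ k ∈ range n, ‖f (ζ ^ k * z)‖ := norm_sum_le _ _
      _ ≤ ∑ _k ∈ range n, 1 := sum_le_sum fun k _ => hb _ (hmem k)
      _ = n := by simp
  choose! h hh hhb using hsub
  simpa using norm_coeff_one_le_one_sub_sq hh hhb

theorem summable_and_tsum_mul_pow_le_one {c : ℕ → ℝ} {r : ℝ} (hc : ∀ n, 0 ≤ c n)
    (hcn : ∀ n, c (n + 1) ≤ 1 - c 0 ^ 2) (hr0 : 0 ≤ r) (hr : r ≤ 1 / 3) :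
    Summable (fun n => c n * r ^ n) ∧ ∑' n, c n * r ^ n ≤ 1 := by
  have hr1 : r < 1 := by linarith
  have hc0 : c 0 ^ 2 ≤ 1 := by linarith [hc 1, hcn 0]
  have hgeom : HasSum (fun n => (1 - c 0 ^ 2) * r * r ^ n) ((1 - c 0 ^ 2) * r * (1 - r)⁻¹) :=
    (hasSum_geometric_of_lt_one hr0 hr1).mul_left _
  have hbound : ∀ n, c (n + 1) * r ^ (n + 1) ≤ (1 - c 0 ^ 2) * r * r ^ n := fun n =>
    calc c (n + 1) * r ^ (n + 1) ≤ (1 - c 0 ^ 2) * r ^ (n + 1) := by gcongr; exact hcn n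
      _ = (1 - c 0 ^ 2) * r * r ^ n := by ring
  have htail : Summable (fun n => c (n + 1) * r ^ (n + 1)) :=
    hgeom.summable.of_nonneg_of_le (fun n => mul_nonneg (hc _) (by positivity)) hbound
  have hsum := (summable_nat_add_iff (f := fun n => c n * r ^ n) 1).1 htail
  refine ⟨hsum, ?_⟩
  have hfrac : r * (1 - r)⁻¹ ≤ 1 / 2 := by
    rw [← div_eq_mul_inv, div_le_iff₀ (by linarith)]
    linarith
  calc ∑' n, c n * r ^ n = c 0 + ∑' n, c (n + 1) * r ^ (n + 1) := by
        simpa using hsum.tsum_eq_zero_add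
    _ ≤ c 0 + (1 - c 0 ^ 2) * r * (1 - r)⁻¹ := by gcongr; exact hasSum_le hbound htail.hasSum hgeom
    _ = c 0 + (1 - c 0 ^ 2) * (r * (1 - r)⁻¹) := by ring
    _ ≤ c 0 + (1 - c 0 ^ 2) * (1 / 2) := by gcongr
    _ ≤ 1 := by nlinarith [sq_nonneg (1 - c 0)]

theorem bohr_inequality_general (f : ℂ → ℂ) (a : ℕ → ℂ)
    (hexp : ∀ z ∈ ball (0 : ℂ) 1, HasSum (fun n => a n * z ^ n) (f z))
    (hb : ∀ z ∈ ball (0 : ℂ) 1, ‖f z‖ ≤ 1)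
    (r : ℝ) (hr0 : 0 ≤ r) (hr : r ≤ 1 / 3) :
    Summable (fun n => ‖a n‖ * r ^ n) ∧
      ∑' n, ‖a n‖ * r ^ n ≤ 1 :=
  summable_and_tsum_mul_pow_le_one (fun n => norm_nonneg (a n))
    (fun n => norm_coeff_le_one_sub_sq hexp hb n.succ_ne_zero) hr0 hr

/-- Bohr's inequality: if `f = ∑ aₙ zⁿ` is analytic on the unit disk with `|f| ≤ 1`,
then `∑ |aₙ| rⁿ ≤ 1` for `0 ≤ r ≤ 1/3`. -/
theorem bohr_inequality (f : ℂ → ℂ) (a : ℕ → ℂ)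
    (hexp : ∀ z ∈ ball (0 : ℂ) 1, HasSum (fun n => a n * z ^ n) (f z))
    (hana : AnalyticOn ℂ f (ball (0 : ℂ) 1))
    (hb : ∀ z ∈ ball (0 : ℂ) 1, ‖f z‖ ≤ 1)
    (r : ℝ) (hr0 : 0 ≤ r) (hr : r ≤ 1 / 3) :
    Summable (fun n => ‖a n‖ * r ^ n) ∧
      ∑' n, ‖a n‖ * r ^ n ≤ 1 :=
  bohr_inequality_general f a hexp hb r hr0 hr
end

section
/- The radius 1/3 in Bohr's inequality is optimal: for every r with 1/3 < r < 1 there exists an analytic function f on the unit disk with |f| ≤ 1 whose Taylor coefficients a_n satisfy ∑_{n=0}^∞ |a_n| r^n > 1. Specifically, for a ∈ (0,1) sufficiently close to 1, the function f(z) = (a − z)/(1 − a z) has this property. -/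
/-!
For real `a ∈ (0, 1)`, `(a - z) / (1 - a z) = a - (1 - a²) ∑ aⁿ zⁿ⁺¹` maps the unit disk into
its closure, and its Bohr sum at radius `r` is `a + (1 - a²) r / (1 - a r)`. This exceeds `1`
exactly when `r (1 + 2a) > 1`, which the choice `a = 1 / (3r)` (so `a r = 1/3`) achieves for
every `r > 1/3`.
-/

open Metric ComplexConjugate

def mobiusCoeff {R : Type*} [Ring R] (a : R) : ℕ → R
  | 0 => a
  | n + 1 => -((1 - a ^ 2) * a ^ n)

noncomputable def bohrSum (c : ℕ → ℂ) (r : ℝ) : ℝ := ∑' n, ‖c n‖ * r ^ n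

theorem hasSum_mobiusCoeff_mul_pow {𝕜 : Type*} [NormedField 𝕜] {a z : 𝕜} (h : ‖a * z‖ < 1) :
    HasSum (fun n => mobiusCoeff a n * z ^ n) ((a - z) / (1 - a * z)) := by
  have hne : 1 - a * z ≠ 0 := sub_ne_zero.2 fun h' => by simp [← h'] at h
  have htail : HasSum (fun n => mobiusCoeff a (n + 1) * z ^ (n + 1))
      (-((1 - a ^ 2) * z) * (1 - a * z)⁻¹) := by
    have hterm : (fun n => mobiusCoeff a (n + 1) * z ^ (n + 1)) =
        fun n => -((1 - a ^ 2) * z) * (a * z) ^ n := by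
      ext n
      simp only [mobiusCoeff]
      ring
    rw [hterm]
    exact (hasSum_geometric_of_norm_lt_one h).mul_left _
  have hval : mobiusCoeff a 0 * z ^ 0 + -((1 - a ^ 2) * z) * (1 - a * z)⁻¹ =
      (a - z) / (1 - a * z) := by
    simp only [mobiusCoeff]
    field_simp
    ring
  rw [← hval]
  exact HasSum.zero_add (f := fun n => mobiusCoeff a n * z ^ n) htail

theorem Complex.normSq_one_sub_conj_mul_sub_normSq_sub (a z : ℂ) :
    normSq (1 - conj a * z) - normSq (a - z) = (1 - normSq a) * (1 - normSq z) := by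
  simp only [normSq_apply, sub_re, sub_im, mul_re, mul_im, conj_re, conj_im, one_re, one_im]
  ring

theorem Complex.norm_sub_div_one_sub_conj_mul_le_one {a z : ℂ} (ha : ‖a‖ ≤ 1) (hz : ‖z‖ < 1) :
    ‖(a - z) / (1 - conj a * z)‖ ≤ 1 := by
  have hne : 1 - conj a * z ≠ 0 := by
    refine sub_ne_zero.2 fun h => ?_
    have : ‖conj a * z‖ < 1 := by
      rw [norm_mul, RCLike.norm_conj]
      exact mul_lt_one_of_nonneg_of_lt_one_right ha (norm_nonneg _) hz
    simp [← h] at this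
  rw [norm_div, div_le_one (norm_pos_iff.2 hne), ← sq_le_sq₀ (norm_nonneg _) (norm_nonneg _),
    ← normSq_eq_norm_sq, ← normSq_eq_norm_sq, ← sub_nonneg,
    normSq_one_sub_conj_mul_sub_normSq_sub, normSq_eq_norm_sq, normSq_eq_norm_sq]
  exact mul_nonneg (by nlinarith [norm_nonneg a]) (by nlinarith [norm_nonneg z])

theorem abs_mobiusCoeff_succ {a : ℝ} (ha : |a| ≤ 1) (n : ℕ) :
    |mobiusCoeff a (n + 1)| = (1 - a ^ 2) * |a| ^ n := by
  have : 0 ≤ 1 - a ^ 2 := by nlinarith [sq_abs a, abs_nonneg a]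
  rw [mobiusCoeff, abs_neg, abs_mul, abs_pow, abs_of_nonneg this]

theorem norm_mobiusCoeff_ofReal (a : ℝ) (n : ℕ) : ‖mobiusCoeff (a : ℂ) n‖ = |mobiusCoeff a n| := by
  have hcast : mobiusCoeff (a : ℂ) n = ↑(mobiusCoeff a n) := by
    cases n <;> simp [mobiusCoeff]
  rw [hcast, Complex.norm_real, Real.norm_eq_abs]

theorem hasSum_abs_mobiusCoeff_mul_pow {a r : ℝ} (ha : |a| ≤ 1) (hr : 0 ≤ r) (har : |a| * r < 1) :
    HasSum (fun n => |mobiusCoeff a n| * r ^ n) (|a| + (1 - a ^ 2) * r / (1 - |a| * r)) := by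
  have htail : HasSum (fun n => |mobiusCoeff a (n + 1)| * r ^ (n + 1))
      ((1 - a ^ 2) * r * (1 - |a| * r)⁻¹) := by
    have hterm : (fun n => |mobiusCoeff a (n + 1)| * r ^ (n + 1)) =
        fun n => (1 - a ^ 2) * r * (|a| * r) ^ n := by
      ext n
      rw [abs_mobiusCoeff_succ ha, mul_pow]
      ring
    rw [hterm]
    exact (hasSum_geometric_of_lt_one (by positivity) har).mul_left _
  have hval : |mobiusCoeff a 0| * r ^ 0 + (1 - a ^ 2) * r * (1 - |a| * r)⁻¹ =
      |a| + (1 - a ^ 2) * r / (1 - |a| * r) := by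
    rw [mobiusCoeff, pow_zero, mul_one, div_eq_mul_inv]
  rw [← hval]
  exact HasSum.zero_add (f := fun n => |mobiusCoeff a n| * r ^ n) htail

theorem bohrSum_mobiusCoeff {a r : ℝ} (ha : |a| ≤ 1) (hr : 0 ≤ r) (har : |a| * r < 1) :
    bohrSum (mobiusCoeff (a : ℂ)) r = |a| + (1 - a ^ 2) * r / (1 - |a| * r) := by
  simp only [bohrSum, norm_mobiusCoeff_ofReal]
  exact (hasSum_abs_mobiusCoeff_mul_pow ha hr har).tsum_eq

theorem one_lt_bohrSum_mobiusCoeff {a r : ℝ} (ha0 : 0 ≤ a) (ha1 : a < 1) (hr : 0 ≤ r)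
    (har : a * r < 1) (h : 1 < r * (1 + 2 * a)) : 1 < bohrSum (mobiusCoeff (a : ℂ)) r := by
  have habs : |a| = a := abs_of_nonneg ha0
  rw [bohrSum_mobiusCoeff (by rw [habs]; exact ha1.le) hr (by rwa [habs]), habs, ← sub_pos]
  have hne : 1 - a * r ≠ 0 := by linarith
  have hexcess : a + (1 - a ^ 2) * r / (1 - a * r) - 1 =
      (1 - a) * (r * (1 + 2 * a) - 1) / (1 - a * r) := by
    field_simp
    ring
  rw [hexcess]
  apply div_pos <;> nlinarith

theorem bohr_radius_sharp_general (r : ℝ) (hr : 1 / 3 < r) :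
    ∃ a : ℝ, a ∈ Set.Ioo (0 : ℝ) 1 ∧
      ∃ c : ℕ → ℂ,
        (∀ z ∈ ball (0 : ℂ) 1,
            HasSum (fun n => c n * z ^ n) ((a - z) / (1 - a * z))) ∧
        (∀ z ∈ ball (0 : ℂ) 1, ‖(a - z) / (1 - a * z)‖ ≤ 1) ∧
        1 < ∑' n, ‖c n‖ * r ^ n := by
  have hr0 : 0 < r := by linarith
  set a := 1 / (3 * r)
  have ha : a ∈ Set.Ioo 0 1 := ⟨by positivity, by rw [div_lt_one (by positivity)]; linarith⟩
  have har : a * r = 1 / 3 := by simp only [a]; field_simp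
  have hnorm_a : ‖(a : ℂ)‖ < 1 := by
    rw [Complex.norm_real, Real.norm_of_nonneg ha.1.le]; exact ha.2
  refine ⟨a, ha, mobiusCoeff (a : ℂ), fun z hz => hasSum_mobiusCoeff_mul_pow ?_,
    fun z hz => ?_, one_lt_bohrSum_mobiusCoeff ha.1.le ha.2 hr0.le (by linarith) ?_⟩
  · rw [norm_mul]
    exact mul_lt_one_of_nonneg_of_lt_one_left (norm_nonneg _) hnorm_a (mem_ball_zero_iff.1 hz).le
  · simpa using Complex.norm_sub_div_one_sub_conj_mul_le_one hnorm_a.le (mem_ball_zero_iff.1 hz)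
  · linarith

/-- Sharpness of the Bohr radius 1/3: for every `1/3 < r < 1` there is `a ∈ (0,1)` such that
the disk automorphism `f(z) = (a - z)/(1 - a z)` (which is analytic and bounded by 1 on the
unit disk) has Taylor coefficients `cₙ` with `∑ |cₙ| rⁿ > 1`. -/
theorem bohr_radius_sharp (r : ℝ) (hr : 1 / 3 < r) (hr1 : r < 1) :
    ∃ a : ℝ, a ∈ Set.Ioo (0 : ℝ) 1 ∧
      ∃ c : ℕ → ℂ,
        (∀ z ∈ ball (0 : ℂ) 1,
            HasSum (fun n => c n * z ^ n) ((a - z) / (1 - a * z))) ∧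
        (∀ z ∈ ball (0 : ℂ) 1, ‖(a - z) / (1 - a * z)‖ ≤ 1) ∧
        1 < ∑' n, ‖c n‖ * r ^ n :=
  bohr_radius_sharp_general r hr
end

section
/- For a ∈ [0,1), r ∈ [0,1), integer m ≥ 1, and p ∈ (0,1], define Ψ_p(a) = 1 − (1−a²)(1+k)Φ − ((r^m + a)/(1 + r^m a))^p where Φ ≥ 0 and k ∈ [0,1]. If 2(1+k)Φ ≤ p(1−r^m)/(1+r^m), then Ψ_p(a) ≥ 0 for all a ∈ [0,1]. -/
/-- If `2(1+k)Φ ≤ p(1-r^m)/(1+r^m)` with `p ∈ (0,1]`, `k ∈ [0,1]`, `Φ ≥ 0`,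
`r ∈ [0,1)`, `m ≥ 1`, then `Ψ_p(a) = 1 - (1-a²)(1+k)Φ - ((r^m+a)/(1+r^m a))^p ≥ 0`
for all `a ∈ [0,1]`. -/
theorem psi_nonneg (r : ℝ) (hr : r ∈ Set.Ico (0 : ℝ) 1) (m : ℕ) (hm : 1 ≤ m)
    (p : ℝ) (hp : p ∈ Set.Ioc (0 : ℝ) 1) (k : ℝ) (hk : k ∈ Set.Icc (0 : ℝ) 1)
    (Φ : ℝ) (hΦ : 0 ≤ Φ)
    (hcond : 2 * (1 + k) * Φ ≤ p * (1 - r ^ m) / (1 + r ^ m)) :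
    ∀ a ∈ Set.Icc (0 : ℝ) 1,
      0 ≤ 1 - (1 - a ^ 2) * (1 + k) * Φ - ((r ^ m + a) / (1 + r ^ m * a)) ^ p := by
  intro a ha
  obtain ⟨ha0, ha1⟩ := ha
  set s : ℝ := r ^ m with hs
  have hs0 : 0 ≤ s := pow_nonneg hr.1 m
  have hs1 : s < 1 := pow_lt_one₀ hr.1 hr.2 (by omega)
  have hd : 0 < 1 + s * a := by nlinarith
  set M : ℝ := (s + a) / (1 + s * a) with hM
  have hM0 : 0 ≤ M := div_nonneg (by linarith) hd.le
  have hM1 : M ≤ 1 := by rw [hM, div_le_one hd]; nlinarith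
  have key : M ^ p ≤ 1 + p * (M - 1) := by
    have := rpow_one_add_le_one_add_mul_self (s := M - 1) (by linarith) hp.1.le hp.2
    simpa using this
  have h1M : 1 - M = (1 - s) * (1 - a) / (1 + s * a) := by
    rw [hM]; field_simp; ring
  -- It suffices to prove (1 - a^2) * (1 + k) * Φ ≤ p * (1 - M)
  have hmain : (1 - a ^ 2) * (1 + k) * Φ ≤ p * (1 - M) := by
    rw [h1M]
    rw [le_div_iff₀ (by nlinarith : (0:ℝ) < 1 + s)] at hcond
    rw [mul_div_assoc', le_div_iff₀ hd]
    have hK : 0 ≤ (1 + k) * Φ := by nlinarith [hk.1]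
    nlinarith [mul_nonneg (mul_nonneg hK (by linarith : (0:ℝ) ≤ 1 - a)) (by nlinarith : (0:ℝ) ≤ (1 + s) - (1 + s * a)),
      mul_nonneg (mul_nonneg hK (by linarith : (0:ℝ) ≤ 1 - a)) (by nlinarith : (0:ℝ) ≤ 2 - (1 + a))]
  linarith
end

section
/- For r ∈ [0,1), a ∈ [0,1), integer m ≥ 1, and p ∈ (1,2], the function Φ(t) = (1 + t^m)² (t^m + a)^{p−1} / (1 + t^m a)^{p+1} satisfies Φ(r^{1/m}) ≥ a^{p−1} for all r ∈ [0,1). Equivalently, (1+s)²(s+a)^{p−1} ≥ a^{p−1}(1+sa)^{p+1} for all s ∈ [0,1) and a ∈ [0,1). -/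
/-- For `p ∈ (1,2]`, `a, s ∈ [0,1)`:
`(1+s)² (s+a)^{p-1} ≥ a^{p-1} (1+sa)^{p+1}`. Equivalently, the function
`Φ(t) = (1+t^m)²(t^m+a)^{p-1}/(1+t^m a)^{p+1}` satisfies `Φ(r^{1/m}) ≥ a^{p-1}`. -/
theorem phi_lower_bound (p : ℝ) (hp : p ∈ Set.Ioc (1 : ℝ) 2)
    (a : ℝ) (ha : a ∈ Set.Ico (0 : ℝ) 1) (s : ℝ) (hs : s ∈ Set.Ico (0 : ℝ) 1) :
    a ^ (p - 1) * (1 + s * a) ^ (p + 1) ≤ (1 + s) ^ 2 * (s + a) ^ (p - 1) := by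
  obtain ⟨hp1, hp2⟩ := hp
  obtain ⟨ha0, ha1⟩ := ha
  obtain ⟨hs0, hs1⟩ := hs
  have hA : (0:ℝ) < 1 + s * a := by nlinarith
  have hB : (0:ℝ) < 1 + s := by linarith
  have hC : (0:ℝ) ≤ s + a := by linarith
  have hp1' : (0:ℝ) ≤ p - 1 := by linarith
  have hkey : a * (1 + s) ^ 2 ≤ (s + a) * (1 + s * a) := by
    nlinarith [mul_nonneg hs0 (sq_nonneg (1 - a))]
  have h1 : (a * (1 + s) ^ 2) ^ (p - 1) ≤ ((s + a) * (1 + s * a)) ^ (p - 1) :=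
    Real.rpow_le_rpow (by positivity) hkey hp1'
  rw [Real.mul_rpow ha0 (by positivity), Real.mul_rpow hC hA.le] at h1
  have hB2 : ((1 + s) ^ 2) ^ (p - 1) = (1 + s) ^ (2 * (p - 1)) := by
    rw [← Real.rpow_natCast (1 + s) 2, ← Real.rpow_mul hB.le]
    norm_num
  have hgoal : a ^ (p - 1) * (1 + s * a) ^ (p + 1) * ((1 + s) ^ 2) ^ (p - 1)
      ≤ (1 + s) ^ 2 * (s + a) ^ (p - 1) * ((1 + s) ^ 2) ^ (p - 1) := by
    calc a ^ (p - 1) * (1 + s * a) ^ (p + 1) * ((1 + s) ^ 2) ^ (p - 1)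
        = a ^ (p - 1) * ((1 + s) ^ 2) ^ (p - 1) * (1 + s * a) ^ (p + 1) := by ring
      _ ≤ (s + a) ^ (p - 1) * (1 + s * a) ^ (p - 1) * (1 + s * a) ^ (p + 1) :=
          mul_le_mul_of_nonneg_right h1 (by positivity)
      _ = (s + a) ^ (p - 1) * (1 + s * a) ^ (2 * p) := by
          rw [mul_assoc, ← Real.rpow_add hA]; ring_nf
      _ ≤ (s + a) ^ (p - 1) * (1 + s) ^ (2 * p) := by
          refine mul_le_mul_of_nonneg_left ?_ (by positivity)
          exact Real.rpow_le_rpow hA.le (by nlinarith) (by linarith)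
      _ = (1 + s) ^ 2 * (s + a) ^ (p - 1) * ((1 + s) ^ 2) ^ (p - 1) := by
          rw [hB2, ← Real.rpow_natCast (1 + s) 2,
            show 2 * p = ((2:ℕ):ℝ) + 2 * (p - 1) by push_cast; ring, Real.rpow_add hB]
          ring
  exact le_of_mul_le_mul_right hgoal (by positivity)
end
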